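/- Let m, g, Crr, H, b, c > 0 be real constants. Define a(D) := m·g·(H + Crr·D) and L(D) := √(H² + D²). Let D > 0 and let V : (0,∞) → (0,∞) be a function differentiable at D whose values satisfy a(s)·V(s)/L(s) + b·V(s)³ = c for all s in a neighborhood of D. Then D·V(D) − L(D)²·V'(D) = V(D)·(m·g·Crr·L(D)² + 3·b·V(D)²·L(D)·D) / (a(D) + 3·b·V(D)²·L(D)), and in particular D·V(D) − L(D)²·V'(D) > 0. -/

import Mathlib

/-!
Differentiating the power balance `a V / L + b V³ = c` at `D` and using `L' = D / L` gives the
linear relation `V' L² (a + 3 b V² L) = V (a D − a' L²)` for `V'`. Substituting it into `D V − L² V'`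
leaves `V (a' L² + 3 b V² L D) / (a + 3 b V² L)`, every factor of which is positive.
-/

open Real

theorem hasDerivAt_sqrt_sq_add_sq (H : ℝ) {x : ℝ} (hx : H ^ 2 + x ^ 2 ≠ 0) :
    HasDerivAt (fun s : ℝ => √(H ^ 2 + s ^ 2)) (x / √(H ^ 2 + x ^ 2)) x := by
  have hsq : HasDerivAt (fun s : ℝ => H ^ 2 + s ^ 2) (2 * x) x := by
    simpa using (hasDerivAt_pow 2 x).const_add (H ^ 2)
  convert hsq.sqrt hx using 1
  field_simp

theorem HasDerivAt.implicit_of_eventually_balance {a L V : ℝ → ℝ} {a' L' V' b c x : ℝ}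
    (ha : HasDerivAt a a' x) (hL : HasDerivAt L L' x) (hV : HasDerivAt V V' x) (hLx : L x ≠ 0)
    (hbal : ∀ᶠ s in nhds x, a s * V s / L s + b * V s ^ 3 = c) :
    V' * L x * (a x + 3 * b * V x ^ 2 * L x) = V x * (a x * L' - a' * L x) := by
  have hF : HasDerivAt (fun s => a s * V s / L s + b * V s ^ 3)
      (((a' * V x + a x * V') * L x - a x * V x * L') / L x ^ 2 + b * (3 * V x ^ 2 * V')) x :=
    ((ha.mul hV).div hL hLx).add (by simpa using (hV.pow 3).const_mul b)
  have hzero := hF.unique ((hasDerivAt_const x c).congr_of_eventuallyEq hbal)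
  field_simp at hzero
  linear_combination hzero

theorem DV_minus_L2_deriv_general (m g Crr H b c : ℝ)
    (hm : 0 < m) (hg : 0 < g) (hCrr : 0 < Crr) (hH : 0 < H) (hb : 0 < b)
    (D : ℝ) (hD : 0 < D)
    (V : ℝ → ℝ) (V' : ℝ)
    (hpos : ∀ s, 0 < s → 0 < V s)
    (hderiv : HasDerivAt V V' D)
    (heq : ∀ᶠ s in nhds D,
      m * g * (H + Crr * s) * V s / Real.sqrt (H ^ 2 + s ^ 2) + b * (V s) ^ 3 = c) :
    D * V D - (Real.sqrt (H ^ 2 + D ^ 2)) ^ 2 * V' =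
      V D * (m * g * Crr * (Real.sqrt (H ^ 2 + D ^ 2)) ^ 2 +
        3 * b * (V D) ^ 2 * Real.sqrt (H ^ 2 + D ^ 2) * D) /
      (m * g * (H + Crr * D) + 3 * b * (V D) ^ 2 * Real.sqrt (H ^ 2 + D ^ 2)) ∧
    0 < D * V D - (Real.sqrt (H ^ 2 + D ^ 2)) ^ 2 * V' := by
  have hsum : 0 < H ^ 2 + D ^ 2 := by positivity
  have hrel := HasDerivAt.implicit_of_eventually_balance
    (a := fun s => m * g * (H + Crr * s)) (a' := m * g * Crr)
    (by simpa using ((hasDerivAt_id D).const_mul Crr).const_add H |>.const_mul (m * g))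
    (hasDerivAt_sqrt_sq_add_sq H hsum.ne') hderiv (sqrt_pos.2 hsum).ne' heq
  set L := √(H ^ 2 + D ^ 2)
  have hL : 0 < L := sqrt_pos.2 hsum
  have hVD : 0 < V D := hpos D hD
  have hden : 0 < m * g * (H + Crr * D) + 3 * b * V D ^ 2 * L := by positivity
  have hid : D * V D - L ^ 2 * V' =
      V D * (m * g * Crr * L ^ 2 + 3 * b * V D ^ 2 * L * D) /
        (m * g * (H + Crr * D) + 3 * b * V D ^ 2 * L) := by
    rw [eq_div_iff hden.ne']
    field_simp at hrel
    linear_combination -hrel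
  exact ⟨hid, hid ▸ by positivity⟩

/-- D·V(D) − L(D)²·V'(D) equals the stated positive expression. -/
theorem DV_minus_L2_deriv (m g Crr H b c : ℝ)
    (hm : 0 < m) (hg : 0 < g) (hCrr : 0 < Crr) (hH : 0 < H) (hb : 0 < b) (hc : 0 < c)
    (D : ℝ) (hD : 0 < D)
    (V : ℝ → ℝ) (V' : ℝ)
    (hpos : ∀ s, 0 < s → 0 < V s)
    (hderiv : HasDerivAt V V' D)
    (heq : ∀ᶠ s in nhds D,
      m * g * (H + Crr * s) * V s / Real.sqrt (H ^ 2 + s ^ 2) + b * (V s) ^ 3 = c) :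
    D * V D - (Real.sqrt (H ^ 2 + D ^ 2)) ^ 2 * V' =
      V D * (m * g * Crr * (Real.sqrt (H ^ 2 + D ^ 2)) ^ 2 +
        3 * b * (V D) ^ 2 * Real.sqrt (H ^ 2 + D ^ 2) * D) /
      (m * g * (H + Crr * D) + 3 * b * (V D) ^ 2 * Real.sqrt (H ^ 2 + D ^ 2)) ∧
    0 < D * V D - (Real.sqrt (H ^ 2 + D ^ 2)) ^ 2 * V' :=
  DV_minus_L2_deriv_general m g Crr H b c hm hg hCrr hH hb D hD V V' hpos hderiv heq
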